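/- arXiv:hep-th/9907130 — 11 statements merged into one kernel-verified Lean document; each statement's English description precedes it below -/
import Mathlib

section
/- The operators l^I_J on the free vector space over finite sequences, defined by l^I_J(s_K) = s_{I·K₂} if K = J·K₂ for some (possibly empty) suffix K₂ and 0 otherwise, satisfy the product formula l^I_J ∘ l^K_L = δ_{K,J} l^I_L + Σ_{J = J₁·J₂, J₂ ≠ ∅, J₁ = K} l^I_{L·J₂} + Σ_{K = K₁·K₂, K₂ ≠ ∅, K₁ = J} l^{I·K₂}_L, where · denotes concatenation. -/
/-- product formula for the operators `l^I_J` of the leftix algebra. -/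
theorem stmt_1 (Λ : ℕ) (hΛ : 0 < Λ)
    (l : List (Fin Λ) → List (Fin Λ) →
      ((List (Fin Λ) →₀ ℂ) →ₗ[ℂ] (List (Fin Λ) →₀ ℂ)))
    (hl : ∀ I J K : List (Fin Λ),
      l I J (Finsupp.single K 1) =
        if J <+: K then Finsupp.single (I ++ K.drop J.length) 1 else 0) :
    ∀ I J K L : List (Fin Λ),
      l I J ∘ₗ l K L =
        (if K = J then l I L else 0)
        + (if K <+: J ∧ K ≠ J then l I (L ++ J.drop K.length) else 0)
        + (if J <+: K ∧ J ≠ K then l (I ++ K.drop J.length) L else 0) := by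
  intro I J K L
  ext M : 2
  simp only [LinearMap.comp_apply, LinearMap.add_apply, Finsupp.lsingle_apply,
    LinearMap.zero_apply]
  rw [hl]
  by_cases hLM : L <+: M
  swap
  · rw [if_neg hLM]
    have hL' : ∀ X : List (Fin Λ), ¬ (L ++ X <+: M) := fun X h =>
      hLM ((List.prefix_append L X).trans h)
    simp only [map_zero]
    split_ifs <;> simp [hl, hLM, hL' _]
  rw [if_pos hLM]
  obtain ⟨S, rfl⟩ := hLM
  rw [hl, List.drop_left]
  by_cases hJK : J <+: K
  · obtain ⟨K₂, rfl⟩ := hJK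
    have hnp : ∀ X : List (Fin Λ), J ++ X <+: J → X = [] := fun X h => by
      have := h.length_le
      simp only [List.length_append] at this
      exact List.eq_nil_of_length_eq_zero (by omega)
    rcases eq_or_ne K₂ [] with rfl | hK₂
    · simp [hl, List.prefix_append, List.drop_left]
    · rw [if_neg (show ¬ J ++ K₂ = J from fun h => hK₂ (by simpa using h)),
        if_neg (show ¬ (J ++ K₂ <+: J ∧ J ++ K₂ ≠ J) from fun h => hK₂ (hnp _ h.1)),
        if_pos (show J <+: J ++ K₂ ∧ J ≠ J ++ K₂ from
          ⟨List.prefix_append _ _, fun h => hK₂ (by simpa using h.symm)⟩),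
        List.drop_left, hl]
      simp [List.append_assoc, List.drop_left, List.prefix_append]
  · have h1 : ¬ K = J := fun h => hJK (h ▸ List.prefix_refl J)
    rw [if_neg h1]
    by_cases hKJ : K <+: J
    · obtain ⟨J₂, rfl⟩ := hKJ
      rw [if_neg (show ¬ (K ++ J₂ <+: K ∧ K ++ J₂ ≠ K) from fun h => hJK h.1),
        if_pos (show K <+: K ++ J₂ ∧ K ≠ K ++ J₂ from ⟨List.prefix_append _ _, h1⟩),
        List.drop_left, hl]
      by_cases h2 : J₂ <+: S
      · rw [if_pos ((List.prefix_append_right_inj K).mpr h2),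
          if_pos ((List.prefix_append_right_inj L).mpr h2)]
        obtain ⟨T, rfl⟩ := h2
        rw [show K ++ (J₂ ++ T) = (K ++ J₂) ++ T from (List.append_assoc ..).symm,
          show L ++ (J₂ ++ T) = (L ++ J₂) ++ T from (List.append_assoc ..).symm,
          List.drop_left, List.drop_left]
        simp
      · rw [if_neg (fun h => h2 ((List.prefix_append_right_inj K).mp h)),
          if_neg (fun h => h2 ((List.prefix_append_right_inj L).mp h))]
        simp
    · have h3 : ¬ (J <+: K ++ S) := fun h => by
        rcases List.prefix_or_prefix_of_prefix h (List.prefix_append K S) with h' | h'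
        · exact hJK h'
        · exact hKJ h'
      rw [if_neg h3, if_neg (show ¬ (K <+: J ∧ K ≠ J) from fun h => hKJ h.1),
        if_neg (show ¬ (J <+: K ∧ J ≠ K) from fun h => hJK h.1)]
      simp
end

section
/- For all finite sequences K and L over Fin Λ, the operator l^K_L − Σ_{j=1}^{Λ} l^{K·j}_{L·j} equals the rank-one-type operator f^K_L, i.e., (l^K_L − Σ_j l^{Kj}_{Lj})(s_M) = δ_{M,L} · s_K for every sequence M. -/
/-!
Write `M = L ++ t` when `L` is a prefix of `M`. If `t = []` only `l^K_L` sees `s_M`, and it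
returns `s_K`; if `t = j :: t'` then `l^K_L` and the single summand `l^{K·j}_{L·j}` both return
`s_{K·j·t'}` and cancel. If `L` is not a prefix of `M`, no `L·j` is either, and every term vanishes.
-/

open Finsupp

theorem List.not_concat_prefix_self {α : Type*} (L : List α) (j : α) : ¬ L ++ [j] <+: L :=
  fun h => by simpa using h.length_le

theorem single_prefix_shift_eq_add_sum {α R : Type*} [Semiring R] [Fintype α] [DecidableEq α]
    (K L M : List α) :
    (if L <+: M then single (K ++ M.drop L.length) (1 : R) else 0) =
      (if M = L then single K 1 else 0) +
        ∑ j : α, if L ++ [j] <+: M then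
          single (K ++ [j] ++ M.drop (L ++ [j]).length) 1 else 0 := by
  by_cases h : L <+: M
  · obtain ⟨t, rfl⟩ := h
    cases t with
    | nil => simp [List.not_concat_prefix_self]
    | cons j t => simp [List.prefix_append_right_inj]
  · have hj : ∀ j, ¬ L ++ [j] <+: M := fun j hj => h ((List.prefix_append L [j]).trans hj)
    rw [if_neg h, if_neg (by rintro rfl; exact h List.prefix_rfl)]
    simp [hj]

theorem stmt_3_general (Λ : ℕ)
    (l : List (Fin Λ) → List (Fin Λ) →
      ((List (Fin Λ) →₀ ℂ) →ₗ[ℂ] (List (Fin Λ) →₀ ℂ)))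
    (hl : ∀ I J K : List (Fin Λ),
      l I J (Finsupp.single K 1) =
        if J <+: K then Finsupp.single (I ++ K.drop J.length) 1 else 0) :
    ∀ K L M : List (Fin Λ),
      (l K L - ∑ j : Fin Λ, l (K ++ [j]) (L ++ [j])) (Finsupp.single M 1) =
        if M = L then Finsupp.single K 1 else 0 := by
  intro K L M
  simp only [LinearMap.sub_apply, LinearMap.coe_sum, Finset.sum_apply, sub_eq_iff_eq_add, hl]
  exact single_prefix_shift_eq_add_sum K L M

/-- `l^K_L − Σ_{j} l^{K·j}_{L·j}` equals the rank-one operator `f^K_L`. -/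
theorem stmt_3 (Λ : ℕ) (hΛ : 0 < Λ)
    (l : List (Fin Λ) → List (Fin Λ) →
      ((List (Fin Λ) →₀ ℂ) →ₗ[ℂ] (List (Fin Λ) →₀ ℂ)))
    (hl : ∀ I J K : List (Fin Λ),
      l I J (Finsupp.single K 1) =
        if J <+: K then Finsupp.single (I ++ K.drop J.length) 1 else 0) :
    ∀ K L M : List (Fin Λ),
      (l K L - ∑ j : Fin Λ, l (K ++ [j]) (L ++ [j])) (Finsupp.single M 1) =
        if M = L then Finsupp.single K 1 else 0 :=
  stmt_3_general Λ l hl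
end

section
/- The span of the operators f^K_L is an ideal for the bracket with the operators l^I_J: explicitly, [l^I_J, f^K_L] = Σ_{K = K₁·K₂, K₁ = J} f^{I·K₂}_L − Σ_{L = L₁·L₂, L₁ = I} f^K_{J·L₂}, where each sum has at most one term (corresponding to J being a prefix of K, resp. I being a prefix of L). -/
/-- the span of the `f^K_L` is an ideal for the bracket with the `l^I_J`:
`[l^I_J, f^K_L] = θ(J prefix of K) f^{I·K₂}_L − θ(I prefix of L) f^K_{J·L₂}`. -/
theorem stmt_4 (Λ : ℕ) (hΛ : 0 < Λ)
    (l f : List (Fin Λ) → List (Fin Λ) →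
      ((List (Fin Λ) →₀ ℂ) →ₗ[ℂ] (List (Fin Λ) →₀ ℂ)))
    (hl : ∀ I J K : List (Fin Λ),
      l I J (Finsupp.single K 1) =
        if J <+: K then Finsupp.single (I ++ K.drop J.length) 1 else 0)
    (hf : ∀ I J K : List (Fin Λ),
      f I J (Finsupp.single K 1) =
        if K = J then Finsupp.single I 1 else 0) :
    ∀ I J K L : List (Fin Λ),
      l I J ∘ₗ f K L - f K L ∘ₗ l I J =
        (if J <+: K then f (I ++ K.drop J.length) L else 0)
        - (if I <+: L then f K (J ++ L.drop I.length) else 0) := by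
  intro I J K L
  apply Finsupp.lhom_ext'
  intro M
  apply LinearMap.ext_ring
  have e : ∀ (A B : Prop) [Decidable A] [Decidable B] (x : List (Fin Λ) →₀ ℂ),
      (if A then (if B then x else 0) else 0) = if A ∧ B then x else 0 := by
    intro A B _ _ x; split_ifs <;> simp_all
  simp only [LinearMap.sub_apply, LinearMap.comp_apply, Finsupp.lsingle_apply, hf, hl,
    apply_ite (l I J), apply_ite (f K L), map_zero,
    apply_ite (fun (g : (List (Fin Λ) →₀ ℂ) →ₗ[ℂ] (List (Fin Λ) →₀ ℂ)) =>
      g (Finsupp.single M 1)), LinearMap.zero_apply, hl, hf, e]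
  congr 1
  · exact if_congr and_comm rfl rfl
  · refine if_congr ?_ rfl rfl
    constructor
    · rintro ⟨hJM, rfl⟩
      refine ⟨⟨_, rfl⟩, ?_⟩
      rw [List.drop_left]
      exact (List.prefix_iff_eq_append.mp hJM).symm
    · rintro ⟨hIL, rfl⟩
      refine ⟨⟨_, rfl⟩, ?_⟩
      rw [List.drop_left]
      exact List.prefix_iff_eq_append.mp hIL
end

section
/- For all finite sequences I, K, L over Fin Λ, [l^I_I, f^K_L] = (θ(I is a prefix of K) − θ(I is a prefix of L)) · f^K_L, where θ(P) is 1 if P holds and 0 otherwise. Hence each f^K_L is a simultaneous eigenvector of the commuting family {ad l^I_I}. -/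
lemma append_drop_of_prefix {α : Type*} {I M : List α} (h : I <+: M) :
    I ++ M.drop I.length = M := by
  obtain ⟨t, rfl⟩ := h
  simp

/-- each `f^K_L` is a simultaneous eigenvector of `ad l^I_I`:
`[l^I_I, f^K_L] = (θ(I ≤ K) − θ(I ≤ L)) f^K_L` where `≤` is the prefix relation. -/
theorem stmt_6 (Λ : ℕ) (hΛ : 0 < Λ)
    (l f : List (Fin Λ) → List (Fin Λ) →
      ((List (Fin Λ) →₀ ℂ) →ₗ[ℂ] (List (Fin Λ) →₀ ℂ)))
    (hl : ∀ I J K : List (Fin Λ),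
      l I J (Finsupp.single K 1) =
        if J <+: K then Finsupp.single (I ++ K.drop J.length) 1 else 0)
    (hf : ∀ I J K : List (Fin Λ),
      f I J (Finsupp.single K 1) =
        if K = J then Finsupp.single I 1 else 0) :
    ∀ I K L : List (Fin Λ),
      l I I ∘ₗ f K L - f K L ∘ₗ l I I =
        ((if I <+: K then (1 : ℂ) else 0) - (if I <+: L then (1 : ℂ) else 0)) •
          f K L := by
  intro I K L
  apply Finsupp.lhom_ext
  intro M b
  have hb : (Finsupp.single M b : List (Fin Λ) →₀ ℂ) = b • Finsupp.single M 1 := by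
    simp [Finsupp.smul_single]
  rw [hb]
  simp only [map_smul, LinearMap.sub_apply, LinearMap.comp_apply, LinearMap.smul_apply]
  congr 1
  rw [hf, hl]
  by_cases hML : M = L
  · subst hML
    rw [if_pos rfl, hl]
    by_cases hIL : I <+: M
    · rw [if_pos hIL, append_drop_of_prefix hIL, if_pos hIL, hf, if_pos rfl]
      by_cases hIK : I <+: K
      · rw [if_pos hIK, append_drop_of_prefix hIK]; simp [hIK]
      · rw [if_neg hIK]; simp [hIK]
    · rw [if_neg hIL, map_zero, if_neg hIL]
      by_cases hIK : I <+: K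
      · rw [if_pos hIK, append_drop_of_prefix hIK]; simp [hIK]
      · rw [if_neg hIK]; simp [hIK]
  · rw [if_neg hML, map_zero]
    by_cases hIM : I <+: M
    · rw [if_pos hIM, append_drop_of_prefix hIM, hf, if_neg hML]
      simp
    · rw [if_neg hIM, map_zero]
      simp
end

section
/- In the Λ = 1 case, the operators ℓ^a_b on the free vector space with basis {s_c : c ∈ ℕ}, defined by ℓ^a_b(s_c) = s_{a+c−b} if b ≤ c and 0 otherwise, satisfy the commutation relation [ℓ^a_b, ℓ^c_d] = θ(c ≤ b) ℓ^a_{b+d−c} + θ(b < c) ℓ^{a+c−b}_d − θ(a ≤ d) ℓ^c_{b+d−a} − θ(d < a) ℓ^{a+c−d}_b, for all natural numbers a, b, c, d. -/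
set_option maxHeartbeats 4000000 in
/-- the Λ = 1 commutation relation for the operators `ℓ^a_b`. -/
theorem stmt_7
    (l : ℕ → ℕ → ((ℕ →₀ ℂ) →ₗ[ℂ] (ℕ →₀ ℂ)))
    (hl : ∀ a b c : ℕ, l a b (Finsupp.single c 1) =
      if b ≤ c then Finsupp.single (a + c - b) 1 else 0) :
    ∀ a b c d : ℕ,
      l a b ∘ₗ l c d - l c d ∘ₗ l a b =
        (if c ≤ b then l a (b + d - c) else 0)
        + (if b < c then l (a + c - b) d else 0)
        - (if a ≤ d then l c (b + d - a) else 0)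
        - (if d < a then l (a + c - d) b else 0) := by
  intro a b c d
  split_ifs with h1 h2 h3 h4 <;>
    first
    | (exfalso; omega)
    | · ext e f
        simp only [LinearMap.sub_apply, LinearMap.add_apply, LinearMap.comp_apply,
          Finsupp.lsingle_apply, hl,
          apply_ite (l a b), apply_ite (l c d), map_zero, LinearMap.zero_apply,
          Finsupp.coe_sub, Finsupp.coe_add, Pi.sub_apply, Pi.add_apply,
          Finsupp.single_apply, apply_ite (fun (v : ℕ →₀ ℂ) => v f), Finsupp.coe_zero,
          Pi.zero_apply]
        split_ifs <;> first | omega | norm_num | (exfalso; omega)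
end

section
/- The operators g^a_b and f̃^{(c)}_{(d)} on closed-string states satisfy [g^a_b, f̃^{(c)}_{(d)}] = c·θ(b ≤ c)·f̃^{(a+c−b)}_{(d)} − d·θ(a ≤ d)·f̃^{(c)}_{(b+d−a)}, and [f̃^{(a)}_{(b)}, f̃^{(c)}_{(d)}] = b·δ_{b,c}·f̃^{(a)}_{(d)} − a·δ_{a,d}·f̃^{(c)}_{(b)}, for all positive integers a, b, c, d. In particular the span of the f̃^{(a)}_{(b)} is an ideal. -/
private lemma pnat_sub_coe' (a b : ℕ+) (h : b < a) : ((a - b : ℕ+) : ℕ) = (a:ℕ) - b := by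
  rw [PNat.sub_coe, if_pos h]

private lemma lhom_key {F G : (ℕ+ →₀ ℂ) →ₗ[ℂ] (ℕ+ →₀ ℂ)}
    (h : ∀ e : ℕ+, F (Finsupp.single e 1) = G (Finsupp.single e 1)) : F = G := by
  apply Finsupp.lhom_ext
  intro e m
  have hm : (Finsupp.single e m : ℕ+ →₀ ℂ) = m • Finsupp.single e 1 := by
    simp [Finsupp.smul_single']
  rw [hm, map_smul, map_smul, h]

private lemma cond_iff (a b d e : ℕ+) :
    (b ≤ e ∧ a + e - b = d) ↔ (a ≤ d ∧ e = b + d - a) := by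
  have key : ∀ a b d e : ℕ+, b ≤ e → a + e - b = d → a ≤ d ∧ e = b + d - a := by
    intro a b d e h1 h2
    have h1' : (b:ℕ) ≤ (e:ℕ) := h1
    have hlt : b < a + e := lt_of_le_of_lt h1 (PNat.lt_add_left e a)
    have hc : ((a + e - b : ℕ+) : ℕ) = (a:ℕ) + (e:ℕ) - (b:ℕ) := by
      rw [pnat_sub_coe' _ _ hlt, PNat.add_coe]
    have h2' : (a:ℕ) + (e:ℕ) - (b:ℕ) = (d:ℕ) := by rw [← hc, h2]
    have ha := a.property
    have had : (a:ℕ) ≤ (d:ℕ) := by omega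
    refine ⟨had, ?_⟩
    have hlt2 : a < b + d := lt_of_le_of_lt had (PNat.lt_add_left d b)
    have hc2 : ((b + d - a : ℕ+) : ℕ) = (b:ℕ) + (d:ℕ) - (a:ℕ) := by
      rw [pnat_sub_coe' _ _ hlt2, PNat.add_coe]
    rw [← PNat.coe_inj, hc2]; omega
  constructor
  · rintro ⟨h1, h2⟩; exact key a b d e h1 h2
  · rintro ⟨h1, h2⟩
    have := key b a e d h1 h2.symm
    exact ⟨this.1, this.2.symm⟩

/-- the commutation relations `[g^a_b, f̃^{(c)}_{(d)}]` and
`[f̃^{(a)}_{(b)}, f̃^{(c)}_{(d)}]` on closed-string states. -/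
theorem stmt_13
    (g ft : ℕ+ → ℕ+ → ((ℕ+ →₀ ℂ) →ₗ[ℂ] (ℕ+ →₀ ℂ)))
    (hg : ∀ a b c : ℕ+, g a b (Finsupp.single c 1) =
      if b ≤ c then ((c : ℕ) : ℂ) • Finsupp.single (a + c - b) 1 else 0)
    (hft : ∀ a b c : ℕ+, ft a b (Finsupp.single c 1) =
      if c = b then ((c : ℕ) : ℂ) • Finsupp.single a 1 else 0) :
    ∀ a b c d : ℕ+,
      (g a b ∘ₗ ft c d - ft c d ∘ₗ g a b =
        (if b ≤ c then ((c : ℕ) : ℂ) • ft (a + c - b) d else 0)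
        - (if a ≤ d then ((d : ℕ) : ℂ) • ft c (b + d - a) else 0)) ∧
      (ft a b ∘ₗ ft c d - ft c d ∘ₗ ft a b =
        (if b = c then ((b : ℕ) : ℂ) • ft a d else 0)
        - (if a = d then ((a : ℕ) : ℂ) • ft c b else 0)) := by
  intro a b c d
  constructor
  · apply lhom_key
    intro e
    simp only [LinearMap.sub_apply, LinearMap.comp_apply]
    have A : g a b (ft c d (Finsupp.single e 1)) =
        if e = d ∧ b ≤ c then (((e:ℕ):ℂ) * ((c:ℕ):ℂ)) • Finsupp.single (a + c - b) 1 else 0 := by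
      rw [hft]
      by_cases h1 : e = d
      · rw [if_pos h1, map_smul, hg]
        by_cases h2 : b ≤ c
        · simp [h1, h2, smul_smul]
        · simp [h1, h2]
      · simp [h1]
    have B : ft c d (g a b (Finsupp.single e 1)) =
        if b ≤ e ∧ a + e - b = d then (((e:ℕ):ℂ) * ((d:ℕ):ℂ)) • Finsupp.single c 1 else 0 := by
      rw [hg]
      by_cases h1 : b ≤ e
      · rw [if_pos h1, map_smul, hft]
        by_cases h2 : a + e - b = d
        · simp [h1, h2, smul_smul]
        · simp [h1, h2]
      · simp [h1]
    have R1 : (if b ≤ c then ((c : ℕ) : ℂ) • ft (a + c - b) d else 0) (Finsupp.single e 1) =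
        if e = d ∧ b ≤ c then (((e:ℕ):ℂ) * ((c:ℕ):ℂ)) • Finsupp.single (a + c - b) 1 else 0 := by
      by_cases h2 : b ≤ c
      · rw [if_pos h2, LinearMap.smul_apply, hft]
        by_cases h1 : e = d
        · simp [h1, h2, smul_smul, mul_comm]
        · simp [h1, h2]
      · simp [h2]
    have R2 : (if a ≤ d then ((d : ℕ) : ℂ) • ft c (b + d - a) else 0) (Finsupp.single e 1) =
        if a ≤ d ∧ e = b + d - a then (((e:ℕ):ℂ) * ((d:ℕ):ℂ)) • Finsupp.single c 1 else 0 := by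
      by_cases h2 : a ≤ d
      · rw [if_pos h2, LinearMap.smul_apply, hft]
        by_cases h1 : e = b + d - a
        · simp [h1, h2, smul_smul, mul_comm]
        · simp [h1, h2]
      · simp [h2]
    rw [A, B, R1, R2]; simp only [cond_iff a b d e]
  · apply lhom_key
    intro e
    simp only [LinearMap.sub_apply, LinearMap.comp_apply]
    have A : ft a b (ft c d (Finsupp.single e 1)) =
        if e = d ∧ c = b then (((e:ℕ):ℂ) * ((c:ℕ):ℂ)) • Finsupp.single a 1 else 0 := by
      rw [hft]
      by_cases h1 : e = d
      · rw [if_pos h1, map_smul, hft]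
        by_cases h2 : c = b
        · simp [h1, h2, smul_smul]
        · simp [h1, h2]
      · simp [h1]
    have B : ft c d (ft a b (Finsupp.single e 1)) =
        if e = b ∧ a = d then (((e:ℕ):ℂ) * ((a:ℕ):ℂ)) • Finsupp.single c 1 else 0 := by
      rw [hft]
      by_cases h1 : e = b
      · rw [if_pos h1, map_smul, hft]
        by_cases h2 : a = d
        · simp [h1, h2, smul_smul]
        · simp [h1, h2]
      · simp [h1]
    have R1 : (if b = c then ((b : ℕ) : ℂ) • ft a d else 0) (Finsupp.single e 1) =
        if e = d ∧ c = b then (((e:ℕ):ℂ) * ((c:ℕ):ℂ)) • Finsupp.single a 1 else 0 := by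
      by_cases h2 : b = c
      · rw [if_pos h2, LinearMap.smul_apply, hft]
        by_cases h1 : e = d
        · simp [h1, h2, smul_smul, mul_comm]
        · simp [h1, h2]
      · simp only [Ne.symm h2, and_false, if_false]
        simp [h2]
    have R2 : (if a = d then ((a : ℕ) : ℂ) • ft c b else 0) (Finsupp.single e 1) =
        if e = b ∧ a = d then (((e:ℕ):ℂ) * ((a:ℕ):ℂ)) • Finsupp.single c 1 else 0 := by
      by_cases h2 : a = d
      · rw [if_pos h2, LinearMap.smul_apply, hft]
        by_cases h1 : e = b
        · simp [h1, h2, smul_smul, mul_comm]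
        · simp [h1, h2]
      · simp [h2]
    rw [A, B, R1, R2]
end

section
/- The family of operators {f̃^{(a)}_{(b)} : a, b ≥ 1} ∪ {g^1_d : d ≥ 1} ∪ {g^c_1 : c ≥ 2} acting on the free vector space spanned by the closed string states {Ψ_c : c ≥ 1} is linearly independent: any finite linear combination Σ α^{(b)}_{(a)} f̃^{(a)}_{(b)} + Σ α^d g^1_d + Σ_{c≥2} α_c g^c_1 that vanishes as an operator has all coefficients zero. -/
private lemma pnat_aux1 (a b : ℕ+) (h : b ≤ a) :
    ((1 + a - b : ℕ+) : ℕ) = 1 + (a:ℕ) - (b:ℕ) := by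
  rw [PNat.sub_coe, if_pos]
  · simp
  · rw [← PNat.coe_lt_coe] at *; rw [← PNat.coe_le_coe] at h
    simp only [PNat.add_coe, PNat.one_coe]; omega

private lemma pnat_aux2 (a b : ℕ+) : ((b + a - 1 : ℕ+) : ℕ) = (b:ℕ) + (a:ℕ) - 1 := by
  rw [PNat.sub_coe, if_pos]
  · simp
  · rw [← PNat.coe_lt_coe]; have := a.one_le; have := b.one_le
    rw [← PNat.coe_le_coe] at *; simp only [PNat.add_coe, PNat.one_coe] at *; omega

private lemma pnat_lt_add (x y : ℕ+) : x < x + y := by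
  rw [← PNat.coe_lt_coe]; have := y.one_le; rw [← PNat.coe_le_coe] at this
  simp only [PNat.add_coe, PNat.one_coe] at *; omega

private lemma pnat_le_add (x y : ℕ+) : x ≤ y + x := by
  rw [← PNat.coe_le_coe]; simp only [PNat.add_coe]; omega

/-- the family `{f̃^{(a)}_{(b)}} ∪ {g^1_d} ∪ {g^c_1 : c ≥ 2}` of
operators on closed-string states is linearly independent. -/
theorem stmt_14
    (g ft : ℕ+ → ℕ+ → ((ℕ+ →₀ ℂ) →ₗ[ℂ] (ℕ+ →₀ ℂ)))
    (hg : ∀ a b c : ℕ+, g a b (Finsupp.single c 1) =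
      if b ≤ c then ((c : ℕ) : ℂ) • Finsupp.single (a + c - b) 1 else 0)
    (hft : ∀ a b c : ℕ+, ft a b (Finsupp.single c 1) =
      if c = b then ((c : ℕ) : ℂ) • Finsupp.single a 1 else 0)
    (α : ℕ+ × ℕ+ →₀ ℂ) (β γ : ℕ+ →₀ ℂ)
    (hγ : ∀ c ∈ γ.support, 2 ≤ c)
    (hzero : (α.sum fun p coef => coef • ft p.1 p.2)
      + (β.sum fun d coef => coef • g 1 d)
      + (γ.sum fun c coef => coef • g c 1) = 0) :
    α = 0 ∧ β = 0 ∧ γ = 0 := by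
  have key : ∀ c x : ℕ+,
      (∑ p ∈ α.support, if c = p.2 then (if p.1 = x then α p * ((c:ℕ):ℂ) else 0) else 0)
      + (∑ d ∈ β.support, if d ≤ c then (if 1 + c - d = x then β d * ((c:ℕ):ℂ) else 0) else 0)
      + (∑ e ∈ γ.support, if (1:ℕ+) ≤ c then (if e + c - 1 = x then γ e * ((c:ℕ):ℂ) else 0) else 0)
        = 0 := by
    intro c x
    have h1 : ((α.sum fun p coef => coef • ft p.1 p.2)
      + (β.sum fun d coef => coef • g 1 d)
      + (γ.sum fun e coef => coef • g e 1)) (Finsupp.single c 1) x = 0 := by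
      rw [hzero]; rfl
    simpa only [Finsupp.sum, LinearMap.add_apply, LinearMap.coe_sum, Finset.sum_apply,
      LinearMap.smul_apply, hg, hft, Finsupp.add_apply, Finsupp.finset_sum_apply,
      apply_ite (fun f : ℕ+ →₀ ℂ => f x),
      Finsupp.smul_apply, Finsupp.single_apply, smul_eq_mul, mul_ite, mul_zero, mul_one,
      Finsupp.coe_zero, Pi.zero_apply, ite_mul, zero_mul, Finsupp.coe_smul] using h1
  have hcast : ∀ M : ℕ+, ((M:ℕ):ℂ) ≠ 0 := fun M => Nat.cast_ne_zero.mpr M.ne_zero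
  -- γ = 0
  have hγ0 : γ = 0 := by
    ext e
    simp only [Finsupp.coe_zero, Pi.zero_apply]
    by_cases he : e ∈ γ.support
    · have he2' : 2 ≤ (e:ℕ) := hγ e he
      set S : ℕ+ := (α.support.sup fun p => p.2) + 1 with hS
      have hb : ∀ d ∈ β.support,
          (if d ≤ S then (if 1 + S - d = e + S - 1 then β d * ((S:ℕ):ℂ) else 0) else 0) = 0 := by
        intro d _
        split_ifs with h h'
        · exfalso
          have h'' := congrArg PNat.val h'
          rw [pnat_aux1 S d h, pnat_aux2 S e] at h''
          have hd1 := d.one_le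
          rw [← PNat.coe_le_coe] at hd1 h
          simp only [PNat.one_coe] at hd1
          omega
        · rfl
        · rfl
      have hc : ∀ e' ∈ γ.support, e' ≠ e →
          (if (1:ℕ+) ≤ S then (if e' + S - 1 = e + S - 1 then γ e' * ((S:ℕ):ℂ) else 0) else 0)
            = 0 := by
        intro e' _ hne
        split_ifs with h h'
        · exfalso
          apply hne
          have h'' := congrArg PNat.val h'
          rw [pnat_aux2 S e', pnat_aux2 S e] at h''
          have h1 := e'.one_le; have h2 := e.one_le
          rw [← PNat.coe_le_coe] at h1 h2
          simp only [PNat.one_coe] at h1 h2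
          exact PNat.coe_inj.mp (by omega)
        · rfl
        · rfl
      have k := key S (e + S - 1)
      rw [Finset.sum_eq_zero (fun p hp => if_neg
          (lt_of_le_of_lt (Finset.le_sup hp) (pnat_lt_add _ 1)).ne'),
        Finset.sum_eq_zero hb,
        Finset.sum_eq_single e hc (fun h => absurd he h)] at k
      simp only [PNat.one_le, if_true, if_pos rfl, zero_add] at k
      exact (mul_eq_zero.mp k).resolve_right (hcast S)
    · exact Finsupp.notMem_support_iff.mp he
  -- β = 0
  have hβ0 : β = 0 := by
    ext d0
    simp only [Finsupp.coe_zero, Pi.zero_apply]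
    set S : ℕ+ := (α.support.sup fun p => p.2) + d0 with hS
    have hd0S : d0 ≤ S := pnat_le_add d0 _
    have hb : ∀ d ∈ β.support, d ≠ d0 →
        (if d ≤ S then (if 1 + S - d = 1 + S - d0 then β d * ((S:ℕ):ℂ) else 0) else 0) = 0 := by
      intro d _ hne
      split_ifs with h h'
      · exfalso
        apply hne
        have h'' := congrArg PNat.val h'
        rw [pnat_aux1 S d h, pnat_aux1 S d0 hd0S] at h''
        have h1 := d.one_le; have h2 := d0.one_le
        rw [← PNat.coe_le_coe] at h1 h2 h hd0S
        simp only [PNat.one_coe] at h1 h2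
        exact PNat.coe_inj.mp (by omega)
      · rfl
      · rfl
    have k := key S (1 + S - d0)
    rw [Finset.sum_eq_zero (fun p hp => if_neg
        (lt_of_le_of_lt (Finset.le_sup hp) (pnat_lt_add _ d0)).ne'),
      Finset.sum_eq_single d0 hb ?_, hγ0] at k
    · simp only [if_pos hd0S, if_pos rfl, zero_add, Finsupp.support_zero, Finset.sum_empty,
        add_zero] at k
      exact (mul_eq_zero.mp k).resolve_right (hcast S)
    · intro h
      rw [Finsupp.notMem_support_iff.mp h, zero_mul, ite_self, ite_self]
  -- α = 0
  have hα0 : α = 0 := by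
    ext p0
    simp only [Finsupp.coe_zero, Pi.zero_apply]
    have ha : ∀ p ∈ α.support, p ≠ p0 →
        (if p0.2 = p.2 then (if p.1 = p0.1 then α p * ((p0.2:ℕ):ℂ) else 0) else 0) = 0 := by
      intro p _ hne
      split_ifs with h h'
      · exact absurd (Prod.ext h' h.symm) hne
      · rfl
      · rfl
    have k := key p0.2 p0.1
    rw [Finset.sum_eq_single p0 ha ?_, hβ0, hγ0] at k
    · simp only [if_pos rfl, Finsupp.support_zero, Finset.sum_empty, add_zero] at k
      exact (mul_eq_zero.mp k).resolve_right (hcast p0.2)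
    · intro h
      rw [Finsupp.notMem_support_iff.mp h, zero_mul, ite_self, ite_self]
  exact ⟨hα0, hβ0, hγ0⟩
end

section
/- The composition g^1_1 ∘ g^1_1 cannot be written as any finite linear combination of the operators g^p_p (p ≥ 1) and f̃^{(q)}_{(q)} (q ≥ 1). Equivalently, the function c ↦ c² on positive integers is not a finite linear combination of the functions c ↦ c·θ(p ≤ c) and c ↦ c·δ_{c,q}. -/
/-- `g^1_1 ∘ g^1_1` is not a finite linear combination of the
operators `g^p_p` and `f̃^{(q)}_{(q)}`. -/
theorem stmt_15
    (g ft : ℕ+ → ℕ+ → ((ℕ+ →₀ ℂ) →ₗ[ℂ] (ℕ+ →₀ ℂ)))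
    (hg : ∀ a b c : ℕ+, g a b (Finsupp.single c 1) =
      if b ≤ c then ((c : ℕ) : ℂ) • Finsupp.single (a + c - b) 1 else 0)
    (hft : ∀ a b c : ℕ+, ft a b (Finsupp.single c 1) =
      if c = b then ((c : ℕ) : ℂ) • Finsupp.single a 1 else 0) :
    ¬ ∃ (α β : ℕ+ →₀ ℂ),
      g 1 1 ∘ₗ g 1 1 =
        (α.sum fun p coef => coef • g p p)
        + (β.sum fun q coef => coef • ft q q) := by
  have pas : ∀ c p : ℕ+, p + c - p = c := by
    intro c p
    apply PNat.coe_injective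
    rw [PNat.sub_coe, if_pos (PNat.lt_add_right p c)]
    simp
  rintro ⟨α, β, h⟩
  set S : ℂ := ∑ p ∈ α.support, α p with hS
  have key : ∀ c : ℕ+, (∀ p ∈ α.support, p ≤ c) → c ∉ β.support →
      ((c : ℕ) : ℂ) * ((c : ℕ) : ℂ) = ((c : ℕ) : ℂ) * S := by
    intro c hp hb
    have hg11 : ∀ d : ℕ+, g 1 1 (Finsupp.single d 1) =
        ((d : ℕ) : ℂ) • Finsupp.single d 1 := by
      intro d
      simp [hg, pas]
    have hL : (g 1 1 ∘ₗ g 1 1) (Finsupp.single c 1) =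
        (((c : ℕ) : ℂ) * ((c : ℕ) : ℂ)) • Finsupp.single c 1 := by
      rw [LinearMap.comp_apply, hg11, map_smul, hg11, smul_smul]
    have happ := DFunLike.congr_fun h (Finsupp.single c 1)
    rw [hL, LinearMap.add_apply, Finsupp.sum, Finsupp.sum,
      LinearMap.sum_apply, LinearMap.sum_apply] at happ
    have hval := DFunLike.congr_fun happ c
    simp only [Finsupp.smul_apply, Finsupp.add_apply, Finsupp.single_eq_same, smul_eq_mul,
      mul_one, Finsupp.finset_sum_apply, LinearMap.smul_apply] at hval
    have hβ : ∑ q ∈ β.support, β q * (ft q q (Finsupp.single c 1)) c = 0 := by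
      apply Finset.sum_eq_zero
      intro q hq
      have hcq : c ≠ q := by rintro rfl; exact hb hq
      simp [hft, hcq]
    have hα : ∑ p ∈ α.support, α p * (g p p (Finsupp.single c 1)) c
        = ((c : ℕ) : ℂ) * S := by
      rw [hS, Finset.mul_sum]
      apply Finset.sum_congr rfl
      intro p hpmem
      have hpc : p ≤ c := hp p hpmem
      simp [hg, hpc, pas]
      ring
    rw [hα, hβ] at hval
    rw [hval]
    ring
  -- pick M larger than all of α.support and β.support
  set M : ℕ+ := (α.support ∪ β.support).sup id + 1 with hM
  have hMbig : ∀ x ∈ α.support ∪ β.support, x < M := by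
    intro x hx
    have : x ≤ (α.support ∪ β.support).sup id := Finset.le_sup (f := id) hx
    exact lt_of_le_of_lt this (PNat.lt_add_right _ 1)
  have h1 := key M (fun p hp => (hMbig p (Finset.mem_union_left _ hp)).le)
    (fun hb => lt_irrefl M (hMbig M (Finset.mem_union_right _ hb)))
  have h2 := key (M + 1)
    (fun p hp => ((hMbig p (Finset.mem_union_left _ hp)).le.trans (PNat.lt_add_right M 1).le))
    (fun hb => absurd (hMbig (M + 1) (Finset.mem_union_right _ hb)) (not_lt.mpr (PNat.lt_add_right M 1).le))
  have hMne : ((M : ℕ) : ℂ) ≠ 0 := Nat.cast_ne_zero.mpr M.pos.ne'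
  have hM1ne : (((M + 1 : ℕ+) : ℕ) : ℂ) ≠ 0 := Nat.cast_ne_zero.mpr (M + 1).pos.ne'
  have e1 : ((M : ℕ) : ℂ) = S := mul_left_cancel₀ hMne h1
  have e2 : (((M + 1 : ℕ+) : ℕ) : ℂ) = S := mul_left_cancel₀ hM1ne h2
  have : ((M : ℕ) : ℂ) = (((M + 1 : ℕ+) : ℕ) : ℂ) := e1.trans e2.symm
  have : (M : ℕ) = ((M + 1 : ℕ+) : ℕ) := Nat.cast_injective this
  simp [PNat.add_coe] at this
end

section
/- Closure of the raising sector of the centrix algebra under overlap: let < be the total order on finite sequences over Fin Λ given by comparing lengths first and then lexicographically. If I > J, K > L (all sequences nonempty), and J = J₁·J₂, K = K₁·K₂ are decompositions with J₂ = K₁ (and K₂ nonempty), then I·K₂ > J₁·L. (This shows the corresponding term σ^{I·K₂}_{J₁·L} in the bracket [σ^I_J, σ^K_L] again lies in the raising subalgebra Σ̂⁺.) -/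
/-- The total order on finite sequences over `Fin Λ`: longer sequences are greater,
and sequences of equal length are compared lexicographically.  `seqGt X Y` means
`X > Y`. -/
def seqGt {Λ : ℕ} (X Y : List (Fin Λ)) : Prop :=
  Y.length < X.length ∨ (X.length = Y.length ∧ List.Lex (· < ·) Y X)

theorem List.Lex.append_right_of_length_eq {α : Type*} {r : α → α → Prop} {X Y : List α}
    (hlen : X.length = Y.length) (h : List.Lex r X Y) (S : List α) :
    List.Lex r (X ++ S) (Y ++ S) := by
  induction h with
  | nil => simp at hlen
  | cons _ ih => exact .cons (ih (by simpa using hlen))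
  | rel hab => exact .rel hab

section seqGt

variable {Λ : ℕ}

theorem seqGt_append_left {X Y : List (Fin Λ)} (h : seqGt X Y) (S : List (Fin Λ)) :
    seqGt (S ++ X) (S ++ Y) := by
  rcases h with hlen | ⟨hlen, hlex⟩
  · exact .inl (by simpa using hlen)
  · exact .inr ⟨by simp [hlen], hlex.append_left _ S⟩

theorem seqGt_append_right {X Y : List (Fin Λ)} (h : seqGt X Y) (S : List (Fin Λ)) :
    seqGt (X ++ S) (Y ++ S) := by
  rcases h with hlen | ⟨hlen, hlex⟩
  · exact .inl (by simpa using hlen)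
  · exact .inr ⟨by simp [hlen], hlex.append_right_of_length_eq hlen.symm S⟩

theorem seqGt_trans {X Y Z : List (Fin Λ)} (hXY : seqGt X Y) (hYZ : seqGt Y Z) :
    seqGt X Z := by
  rcases hXY with hXY | ⟨hXY, lexXY⟩ <;> rcases hYZ with hYZ | ⟨hYZ, lexYZ⟩
  · exact .inl (hYZ.trans hXY)
  · exact .inl (hYZ ▸ hXY)
  · exact .inl (hXY ▸ hYZ)
  · exact .inr ⟨hXY.trans hYZ, lt_trans (α := List (Fin Λ)) lexYZ lexXY⟩

end seqGt

theorem stmt_17_general (Λ : ℕ) (I J K L J₁ J₂ K₁ K₂ : List (Fin Λ))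
    (hJd : J = J₁ ++ J₂) (hKd : K = K₁ ++ K₂) (hJK : J₂ = K₁)
    (hIJ : seqGt I J) (hKL : seqGt K L) :
    seqGt (I ++ K₂) (J₁ ++ L) := by
  subst hJd hKd hJK
  have hIK : seqGt (I ++ K₂) (J₁ ++ (J₂ ++ K₂)) := by
    simpa only [List.append_assoc] using seqGt_append_right hIJ K₂
  exact seqGt_trans hIK (seqGt_append_left hKL J₁)

/-- closure of the raising sector of the centrix algebra under overlap:
if `I > J`, `K > L`, `J = J₁·J₂`, `K = K₁·K₂` with `J₂ = K₁` and `K₂` nonempty,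
then `I·K₂ > J₁·L`. -/
theorem stmt_17 (Λ : ℕ) (I J K L J₁ J₂ K₁ K₂ : List (Fin Λ))
    (hI : I ≠ []) (hJ : J ≠ []) (hK : K ≠ []) (hL : L ≠ [])
    (hJ₁ : J₁ ≠ []) (hJ₂ : J₂ ≠ []) (hK₂ : K₂ ≠ [])
    (hJd : J = J₁ ++ J₂) (hKd : K = K₁ ++ K₂) (hJK : J₂ = K₁)
    (hIJ : seqGt I J) (hKL : seqGt K L) :
    seqGt (I ++ K₂) (J₁ ++ L) :=
  stmt_17_general Λ I J K L J₁ J₂ K₁ K₂ hJd hKd hJK hIJ hKL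
end

section
/- First Dolan–Grady condition for the quantum Ising chain: on the n-site periodic spin-1/2 chain, with H₀ = Σ_{p=1}^{n} τ^z_p and V = Σ_{p=1}^{n} τ^x_p τ^x_{p+1} (indices mod n), the operators satisfy [H₀, [H₀, [H₀, V]]] = 16 [H₀, V]. -/
/-- The Pauli operator `τ^z_p` on the `n`-site spin-1/2 chain `(ℂ²)^{⊗n}`, realized
on the function space `(Fin n → Fin 2) → ℂ` with basis indexed by spin
configurations: it multiplies a basis state by `+1` if the spin at site `p` is up
and by `−1` if it is down. -/
noncomputable def tauZ (n : ℕ) (p : Fin n) :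
    Module.End ℂ ((Fin n → Fin 2) → ℂ) :=
  LinearMap.pi fun s => (if s p = 0 then (1 : ℂ) else -1) • LinearMap.proj s

/-- The Pauli operator `τ^x_p` on the `n`-site spin-1/2 chain: it flips the spin at
site `p`. -/
noncomputable def tauX (n : ℕ) (p : Fin n) :
    Module.End ℂ ((Fin n → Fin 2) → ℂ) :=
  LinearMap.pi fun s => LinearMap.proj (Function.update s p (1 - s p))

/-- `H₀ = Σ_p τ^z_p` for the quantum Ising chain. -/
noncomputable def isingH0 (n : ℕ) : Module.End ℂ ((Fin n → Fin 2) → ℂ) :=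
  ∑ p : Fin n, tauZ n p

/-- `V = Σ_p τ^x_p τ^x_{p+1}` (periodic boundary conditions, indices mod `n`). -/
noncomputable def isingV (n : ℕ) [NeZero n] : Module.End ℂ ((Fin n → Fin 2) → ℂ) :=
  ∑ p : Fin n, tauX n p * tauX n (p + 1)

/-! ### Auxiliary machinery -/

noncomputable def hh (n : ℕ) (s : Fin n → Fin 2) : ℂ :=
  ∑ q, if s q = 0 then (1 : ℂ) else -1

noncomputable def flipP (n : ℕ) [NeZero n] (p : Fin n) (s : Fin n → Fin 2) :
    Fin n → Fin 2 :=
  Function.update (Function.update s p (1 - s p)) (p + 1) (1 - s (p + 1))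

noncomputable def Wd (n : ℕ) [NeZero n] (d : Fin n → (Fin n → Fin 2) → ℂ) :
    Module.End ℂ ((Fin n → Fin 2) → ℂ) :=
  LinearMap.pi fun s => ∑ p, d p s • LinearMap.proj (flipP n p s)

variable {n : ℕ}

lemma Wd_apply [NeZero n] (d : Fin n → (Fin n → Fin 2) → ℂ)
    (f : (Fin n → Fin 2) → ℂ) (s : Fin n → Fin 2) :
    Wd n d f s = ∑ p, d p s * f (flipP n p s) := by
  simp [Wd, LinearMap.pi_apply]

lemma H0_apply (f : (Fin n → Fin 2) → ℂ) (s : Fin n → Fin 2) :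
    isingH0 n f s = hh n s * f s := by
  simp only [isingH0, LinearMap.sum_apply, Finset.sum_apply, tauZ, LinearMap.pi_apply,
    LinearMap.smul_apply, LinearMap.proj_apply, smul_eq_mul, hh, Finset.sum_mul]

lemma succ_ne [NeZero n] (hn : 3 ≤ n) (p : Fin n) : p + 1 ≠ p := by
  intro h
  have h1 : (1 : Fin n) = 0 := by
    have h2 : p + 1 = p + 0 := by simpa using h
    exact add_left_cancel h2
  rw [Fin.one_eq_zero_iff] at h1
  omega

lemma V_apply [NeZero n] (hn : 3 ≤ n) (f : (Fin n → Fin 2) → ℂ)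
    (s : Fin n → Fin 2) :
    isingV n f s = ∑ p, f (flipP n p s) := by
  simp only [isingV, LinearMap.sum_apply, Finset.sum_apply]
  refine Finset.sum_congr rfl fun p _ => ?_
  simp [tauX, Module.End.mul_apply, flipP, Function.update_of_ne (succ_ne hn p)]

lemma comm_H0_Wd [NeZero n] (d : Fin n → (Fin n → Fin 2) → ℂ) :
    ⁅isingH0 n, Wd n d⁆ =
      Wd n (fun p s => (hh n s - hh n (flipP n p s)) * d p s) := by
  apply LinearMap.ext; intro f; funext s
  rw [Ring.lie_def]
  simp only [LinearMap.sub_apply, Module.End.mul_apply, Pi.sub_apply]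
  rw [H0_apply, Wd_apply, Wd_apply, Wd_apply]
  simp only [H0_apply]
  rw [Finset.mul_sum, ← Finset.sum_sub_distrib]
  exact Finset.sum_congr rfl fun p _ => by ring

lemma comm_H0_V [NeZero n] (hn : 3 ≤ n) :
    ⁅isingH0 n, isingV n⁆ = Wd n (fun p s => hh n s - hh n (flipP n p s)) := by
  apply LinearMap.ext; intro f; funext s
  rw [Ring.lie_def]
  simp only [LinearMap.sub_apply, Module.End.mul_apply, Pi.sub_apply]
  rw [H0_apply, V_apply hn, V_apply hn, Wd_apply]
  simp only [H0_apply]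
  rw [Finset.mul_sum, ← Finset.sum_sub_distrib]
  exact Finset.sum_congr rfl fun p _ => by ring

lemma Wd_smul [NeZero n] (c : ℂ) (d : Fin n → (Fin n → Fin 2) → ℂ) :
    c • Wd n d = Wd n (fun p s => c * d p s) := by
  apply LinearMap.ext; intro f; funext s
  simp only [LinearMap.smul_apply, Pi.smul_apply, smul_eq_mul, Wd_apply,
    Finset.mul_sum]
  exact Finset.sum_congr rfl fun p _ => by ring

lemma fin2_cases (a : Fin 2) : a = 0 ∨ a = 1 := by revert a; decide

lemma delta_eq [NeZero n] (hn : 3 ≤ n) (p : Fin n) (s : Fin n → Fin 2) :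
    hh n s - hh n (flipP n p s) =
      2 * ((if s p = 0 then (1 : ℂ) else -1) +
        (if s (p + 1) = 0 then (1 : ℂ) else -1)) := by
  have hne := succ_ne hn p
  rw [hh, hh, ← Finset.sum_sub_distrib]
  rw [Fintype.sum_eq_add p (p + 1) (Ne.symm hne) ?_]
  · have h1 : flipP n p s p = 1 - s p := by
      simp [flipP, Function.update_of_ne (Ne.symm hne)]
    have h2 : flipP n p s (p + 1) = 1 - s (p + 1) := by simp [flipP]
    rw [h1, h2]
    rcases fin2_cases (s p) with h | h <;> rcases fin2_cases (s (p + 1)) with h' | h' <;>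
      simp [h, h'] <;> ring
  · rintro q ⟨hqp, hqp1⟩
    have : flipP n p s q = s q := by
      simp [flipP, Function.update_of_ne hqp1, Function.update_of_ne hqp]
    rw [this, sub_self]

/-- the first Dolan–Grady condition for the quantum Ising chain:
`[H₀, [H₀, [H₀, V]]] = 16 [H₀, V]`. -/
theorem stmt_18 (n : ℕ) [NeZero n] (hn : 3 ≤ n) :
    ⁅isingH0 n, ⁅isingH0 n, ⁅isingH0 n, isingV n⁆⁆⁆ =
      (16 : ℂ) • ⁅isingH0 n, isingV n⁆ := by
  rw [comm_H0_V hn, comm_H0_Wd, comm_H0_Wd, Wd_smul]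
  congr 1
  funext p s
  rw [delta_eq hn]
  rcases fin2_cases (s p) with h | h <;> rcases fin2_cases (s (p + 1)) with h' | h' <;>
    simp [h, h'] <;> ring
end

section
/- Second Dolan–Grady condition for the quantum Ising chain: with H₀ = Σ_{p=1}^{n} τ^z_p and V = Σ_{p=1}^{n} τ^x_p τ^x_{p+1} on the n-site periodic chain, one also has [V, [V, [V, H₀]]] = 16 [V, H₀]. -/
/-!
Since `τ^z τ^x = i τ^y`, the operators `yxTerm p = i τ^y_p τ^x_{p+1}`,
`xyTerm p = i τ^x_p τ^y_{p+1}` and `xzxTerm p = τ^x_p τ^z_{p+1} τ^x_{p+2}` are the natural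
companions of `τ^z_p`. A bond `τ^x_q τ^x_{q+1}` of `V` commutes with every product of Pauli
operators that has no `τ^z` at `q` or `q + 1`, so bracketing `V` with any of these operators
involves only two bonds, and a direct computation gives
`[V, H₀] = -2 A`, `[V, A] = -4 (H₀ + G)`, `[V, G] = -2 A`
with `A = Σ_p (yxTerm p + xyTerm p)` and `G = Σ_p xzxTerm p`. Hence
`[V, [V, [V, H₀]]] = 8 ([V, H₀] + [V, G]) = -32 A = 16 [V, H₀]`.
-/

theorem Ring.lie_add {R : Type*} [Ring R] (x y z : R) : ⁅x, y + z⁆ = ⁅x, y⁆ + ⁅x, z⁆ := by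
  simp only [Ring.lie_def, mul_add, add_mul]
  abel

theorem Module.End.lie_smul {S M : Type*} [CommRing S] [AddCommGroup M] [Module S M] (t : S)
    (x y : Module.End S M) : ⁅x, t • y⁆ = t • ⁅x, y⁆ := by
  rw [Ring.lie_def, Ring.lie_def, mul_smul_comm, smul_mul_assoc, smul_sub]

theorem Ring.sum_lie {R ι : Type*} [Ring R] (s : Finset ι) (f : ι → R) (x : R) :
    ⁅∑ i ∈ s, f i, x⁆ = ∑ i ∈ s, ⁅f i, x⁆ := by
  simp only [Ring.lie_def, Finset.sum_mul, Finset.mul_sum, Finset.sum_sub_distrib]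

theorem Ring.lie_sum {R ι : Type*} [Ring R] (s : Finset ι) (f : ι → R) (x : R) :
    ⁅x, ∑ i ∈ s, f i⁆ = ∑ i ∈ s, ⁅x, f i⁆ := by
  simp only [Ring.lie_def, Finset.sum_mul, Finset.mul_sum, Finset.sum_sub_distrib]

theorem Fintype.sum_comp_add_right {G M : Type*} [AddGroup G] [Fintype G] [AddCommMonoid M]
    (f : G → M) (a : G) : ∑ g, f (g + a) = ∑ g, f g :=
  Fintype.sum_equiv (Equiv.addRight a) _ _ fun _ => rfl

theorem Fintype.sum_comp_sub_right {G M : Type*} [AddGroup G] [Fintype G] [AddCommMonoid M]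
    (f : G → M) (a : G) : ∑ g, f (g - a) = ∑ g, f g :=
  Fintype.sum_equiv (Equiv.subRight a) _ _ fun _ => rfl

theorem Fin.add_one_ne_self {n : ℕ} [NeZero n] (hn : 2 ≤ n) (p : Fin n) : p + 1 ≠ p :=
  add_ne_left.mpr <| by rw [Ne, Fin.one_eq_zero_iff]; omega

theorem Fin.sub_one_ne_self {n : ℕ} [NeZero n] (hn : 2 ≤ n) (p : Fin n) : p - 1 ≠ p := fun h =>
  Fin.add_one_ne_self hn (p - 1) (by rw [sub_add_cancel, h])

namespace IsingChain

variable {n : ℕ}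

@[simp]
lemma tauZ_apply (p : Fin n) (v : (Fin n → Fin 2) → ℂ) (s : Fin n → Fin 2) :
    tauZ n p v s = (if s p = 0 then 1 else -1) * v s := by
  simp only [tauZ, LinearMap.pi_apply, LinearMap.smul_apply, LinearMap.proj_apply, smul_eq_mul]

-- Reading `Fin 2` as `ZMod 2`, `τ^x_p` translates the configuration by the unit vector at `p`.
@[simp]
lemma tauX_apply (p : Fin n) (v : (Fin n → Fin 2) → ℂ) (s : Fin n → Fin 2) :
    tauX n p v s = v (s + Pi.single p 1) := by
  show v _ = v _
  congr 1
  funext q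
  rcases eq_or_ne q p with rfl | h
  · simp only [Function.update_self, Pi.add_apply, Pi.single_eq_same]
    generalize s q = x
    revert x
    decide
  · simp [h]

@[simp]
lemma single_add_single (p : Fin n) : (Pi.single p 1 + Pi.single p 1 : Fin n → Fin 2) = 0 := by
  rw [← Pi.single_add]
  exact Pi.single_zero p

@[simp]
lemma single_add_single_add (p : Fin n) (s : Fin n → Fin 2) :
    Pi.single p 1 + (Pi.single p 1 + s) = s := by
  rw [← add_assoc, single_add_single, zero_add]

@[simp]
lemma sign_add_one (x : Fin 2) :
    (if x + 1 = 0 then (1 : ℂ) else -1) = -(if x = 0 then 1 else -1) := by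
  fin_cases x <;> simp

lemma commute_tauX_tauX (a b : Fin n) : Commute (tauX n a) (tauX n b) :=
  LinearMap.ext fun v => funext fun s => by simp [add_right_comm]

lemma commute_tauX_tauZ {a b : Fin n} (h : a ≠ b) : Commute (tauX n a) (tauZ n b) :=
  LinearMap.ext fun v => funext fun s => by simp [h.symm]

lemma commute_bond_tauX (a b c : Fin n) : Commute (tauX n a * tauX n b) (tauX n c) :=
  (commute_tauX_tauX a c).mul_left (commute_tauX_tauX b c)

lemma commute_bond_tauZ {a b c : Fin n} (hac : a ≠ c) (hbc : b ≠ c) :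
    Commute (tauX n a * tauX n b) (tauZ n c) :=
  (commute_tauX_tauZ hac).mul_left (commute_tauX_tauZ hbc)

section AdjacentBonds

variable {a b c : Fin n}

lemma lie_adjacent_bonds_tauZ (hab : a ≠ b) (hcb : c ≠ b) :
    ⁅tauX n b * tauX n c, tauZ n b⁆ + ⁅tauX n a * tauX n b, tauZ n b⁆ =
      (-2 : ℂ) • (tauZ n b * tauX n b * tauX n c + tauX n a * (tauZ n b * tauX n b)) := by
  refine LinearMap.ext fun v => funext fun s => ?_
  simp only [Ring.lie_def, LinearMap.add_apply, LinearMap.sub_apply, LinearMap.smul_apply,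
    Module.End.mul_apply, Pi.add_apply, Pi.sub_apply, Pi.smul_apply, smul_eq_mul, tauX_apply,
    tauZ_apply, Pi.single_eq_same, Pi.single_eq_of_ne hab.symm, Pi.single_eq_of_ne hcb.symm,
    add_zero, zero_add, sign_add_one, add_comm, add_left_comm]
  split_ifs <;> ring

lemma lie_adjacent_bonds_yx (hab : a ≠ b) (hcb : c ≠ b) :
    ⁅tauX n b * tauX n c, tauZ n b * tauX n b * tauX n c⁆ +
        ⁅tauX n a * tauX n b, tauZ n b * tauX n b * tauX n c⁆ =
      (-2 : ℂ) • (tauZ n b + tauX n a * tauZ n b * tauX n c) := by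
  refine LinearMap.ext fun v => funext fun s => ?_
  simp only [Ring.lie_def, LinearMap.add_apply, LinearMap.sub_apply, LinearMap.smul_apply,
    Module.End.mul_apply, Pi.add_apply, Pi.sub_apply, Pi.smul_apply, smul_eq_mul, tauX_apply,
    tauZ_apply, Pi.single_eq_same, Pi.single_eq_of_ne hab.symm, Pi.single_eq_of_ne hcb.symm,
    add_zero, zero_add, sign_add_one, add_comm, add_left_comm, single_add_single,
    single_add_single_add]
  split_ifs <;> ring

lemma lie_adjacent_bonds_xy (hab : a ≠ b) (hcb : c ≠ b) :
    ⁅tauX n a * tauX n b, tauX n a * (tauZ n b * tauX n b)⁆ +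
        ⁅tauX n b * tauX n c, tauX n a * (tauZ n b * tauX n b)⁆ =
      (-2 : ℂ) • (tauZ n b + tauX n a * tauZ n b * tauX n c) := by
  refine LinearMap.ext fun v => funext fun s => ?_
  simp only [Ring.lie_def, LinearMap.add_apply, LinearMap.sub_apply, LinearMap.smul_apply,
    Module.End.mul_apply, Pi.add_apply, Pi.sub_apply, Pi.smul_apply, smul_eq_mul, tauX_apply,
    tauZ_apply, Pi.single_eq_same, Pi.single_eq_of_ne hab.symm, Pi.single_eq_of_ne hcb.symm,
    add_zero, zero_add, sign_add_one, add_comm, add_left_comm, single_add_single,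
    single_add_single_add]
  split_ifs <;> ring

lemma lie_adjacent_bonds_xzx (hab : a ≠ b) (hcb : c ≠ b) :
    ⁅tauX n a * tauX n b, tauX n a * tauZ n b * tauX n c⁆ +
        ⁅tauX n b * tauX n c, tauX n a * tauZ n b * tauX n c⁆ =
      (-2 : ℂ) • (tauZ n b * tauX n b * tauX n c + tauX n a * (tauZ n b * tauX n b)) := by
  refine LinearMap.ext fun v => funext fun s => ?_
  simp only [Ring.lie_def, LinearMap.add_apply, LinearMap.sub_apply, LinearMap.smul_apply,
    Module.End.mul_apply, Pi.add_apply, Pi.sub_apply, Pi.smul_apply, smul_eq_mul, tauX_apply,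
    tauZ_apply, Pi.single_eq_same, Pi.single_eq_of_ne hab.symm, Pi.single_eq_of_ne hcb.symm,
    add_zero, zero_add, sign_add_one, add_comm, add_left_comm, single_add_single,
    single_add_single_add]
  split_ifs <;> ring

end AdjacentBonds

section Periodic

variable [NeZero n]

lemma lie_isingV_eq_of_commute {Y : Module.End ℂ ((Fin n → Fin 2) → ℂ)} {i j : Fin n}
    (hij : i ≠ j) (h : ∀ q, q ≠ i → q ≠ j → Commute (tauX n q * tauX n (q + 1)) Y) :
    ⁅isingV n, Y⁆ = ⁅tauX n i * tauX n (i + 1), Y⁆ + ⁅tauX n j * tauX n (j + 1), Y⁆ := by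
  rw [isingV, Ring.sum_lie]
  exact Fintype.sum_eq_add i j hij fun q hq => (h q hq.1 hq.2).lie_eq

noncomputable def yxTerm (n : ℕ) [NeZero n] (p : Fin n) : Module.End ℂ ((Fin n → Fin 2) → ℂ) :=
  tauZ n p * tauX n p * tauX n (p + 1)

noncomputable def xyTerm (n : ℕ) [NeZero n] (p : Fin n) : Module.End ℂ ((Fin n → Fin 2) → ℂ) :=
  tauX n p * (tauZ n (p + 1) * tauX n (p + 1))

noncomputable def xzxTerm (n : ℕ) [NeZero n] (p : Fin n) : Module.End ℂ ((Fin n → Fin 2) → ℂ) :=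
  tauX n p * tauZ n (p + 1) * tauX n (p + 1 + 1)

lemma lie_isingV_tauZ (hn : 2 ≤ n) (p : Fin n) :
    ⁅isingV n, tauZ n p⁆ = (-2 : ℂ) • (yxTerm n p + xyTerm n (p - 1)) := by
  rw [lie_isingV_eq_of_commute (Fin.sub_one_ne_self hn p).symm fun q hp hp' =>
      commute_bond_tauZ hp fun h => hp' (eq_sub_of_add_eq h), sub_add_cancel, yxTerm, xyTerm,
    sub_add_cancel]
  exact lie_adjacent_bonds_tauZ (Fin.sub_one_ne_self hn p) (Fin.add_one_ne_self hn p)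

lemma lie_isingV_yxTerm (hn : 2 ≤ n) (p : Fin n) :
    ⁅isingV n, yxTerm n p⁆ = (-2 : ℂ) • (tauZ n p + xzxTerm n (p - 1)) := by
  rw [yxTerm, lie_isingV_eq_of_commute (Fin.sub_one_ne_self hn p).symm fun q hp hp' =>
      ((commute_bond_tauZ hp fun h => hp' (eq_sub_of_add_eq h)).mul_right
        (commute_bond_tauX _ _ _)).mul_right (commute_bond_tauX _ _ _),
    sub_add_cancel, xzxTerm, sub_add_cancel]
  exact lie_adjacent_bonds_yx (Fin.sub_one_ne_self hn p) (Fin.add_one_ne_self hn p)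

lemma lie_isingV_xyTerm (hn : 2 ≤ n) (p : Fin n) :
    ⁅isingV n, xyTerm n p⁆ = (-2 : ℂ) • (tauZ n (p + 1) + xzxTerm n p) := by
  rw [xyTerm, lie_isingV_eq_of_commute (Fin.add_one_ne_self hn p).symm fun q hp hp' =>
      (commute_bond_tauX _ _ _).mul_right ((commute_bond_tauZ hp'
        fun h => hp (add_right_cancel h)).mul_right (commute_bond_tauX _ _ _)), xzxTerm]
  exact lie_adjacent_bonds_xy (Fin.add_one_ne_self hn p).symm (Fin.add_one_ne_self hn (p + 1))

lemma lie_isingV_xzxTerm (hn : 2 ≤ n) (p : Fin n) :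
    ⁅isingV n, xzxTerm n p⁆ = (-2 : ℂ) • (yxTerm n (p + 1) + xyTerm n p) := by
  rw [xzxTerm, lie_isingV_eq_of_commute (Fin.add_one_ne_self hn p).symm fun q hp hp' =>
      ((commute_bond_tauX _ _ _).mul_right (commute_bond_tauZ hp'
        fun h => hp (add_right_cancel h))).mul_right (commute_bond_tauX _ _ _), yxTerm, xyTerm]
  exact lie_adjacent_bonds_xzx (Fin.add_one_ne_self hn p).symm (Fin.add_one_ne_self hn (p + 1))

lemma lie_isingV_isingH0 (hn : 2 ≤ n) :
    ⁅isingV n, isingH0 n⁆ = (-2 : ℂ) • ∑ p, (yxTerm n p + xyTerm n p) := by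
  simp only [isingH0, Ring.lie_sum, lie_isingV_tauZ hn, ← Finset.smul_sum,
    Finset.sum_add_distrib, Fintype.sum_comp_sub_right (xyTerm n)]

lemma lie_isingV_sum_yxTerm_add_xyTerm (hn : 2 ≤ n) :
    ⁅isingV n, ∑ p, (yxTerm n p + xyTerm n p)⁆ = (-4 : ℂ) • (isingH0 n + ∑ p, xzxTerm n p) := by
  rw [isingH0]
  simp only [Ring.lie_sum, Ring.lie_add, lie_isingV_yxTerm hn, lie_isingV_xyTerm hn,
    ← smul_add, ← Finset.smul_sum, Finset.sum_add_distrib, Fintype.sum_comp_sub_right (xzxTerm n),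
    Fintype.sum_comp_add_right (tauZ n)]
  module

lemma lie_isingV_sum_xzxTerm (hn : 2 ≤ n) :
    ⁅isingV n, ∑ p, xzxTerm n p⁆ = (-2 : ℂ) • ∑ p, (yxTerm n p + xyTerm n p) := by
  simp only [Ring.lie_sum, lie_isingV_xzxTerm hn, ← Finset.smul_sum, Finset.sum_add_distrib,
    Fintype.sum_comp_add_right (yxTerm n)]

end Periodic

end IsingChain

open IsingChain in
/-- the second Dolan–Grady condition for the quantum Ising chain:
`[V, [V, [V, H₀]]] = 16 [V, H₀]`. -/
theorem stmt_19 (n : ℕ) [NeZero n] (hn : 5 ≤ n) :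
    ⁅isingV n, ⁅isingV n, ⁅isingV n, isingH0 n⁆⁆⁆ =
      (16 : ℂ) • ⁅isingV n, isingH0 n⁆ := by
  have hn₂ : 2 ≤ n := by omega
  rw [lie_isingV_isingH0 hn₂]
  simp only [Module.End.lie_smul, lie_isingV_sum_yxTerm_add_xyTerm hn₂, Ring.lie_add,
    lie_isingV_isingH0 hn₂, lie_isingV_sum_xzxTerm hn₂]
  module
end
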